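/- arXiv:2310.14160 — 2 statements merged into one kernel-verified Lean document; each statement's English description precedes it below -/
import Mathlib

section
/- In the q-CSP-to-2-CSP construction with E nonempty: for every ε ∈ (0,1), if val_G(ψ^ini ↭ ψ^tar) < 1 − ε, then for all assignments ψ'^ini compatible with ψ^ini and ψ'^tar compatible with ψ^tar it holds that val_{G'}(ψ'^ini ↭ ψ'^tar) < 1 − ε/q. -/
/-- Two assignments differ on at most one vertex. -/
def adjOne {V A : Type*} (ψ φ : V → A) : Prop := ∃ v0, ∀ v, v ≠ v0 → ψ v = φ v

/-- Value of an assignment: the fraction of constraints (indexed by `ι`, with multiplicity)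
that it satisfies. -/
noncomputable def valC {V A ι : Type*} [Fintype ι] (sat : ι → (V → A) → Prop)
    (ψ : V → A) : ℝ :=
  (Nat.card {i : ι // sat i ψ} : ℝ) / (Fintype.card ι : ℝ)

/-- The minimum value along a sequence of assignments. -/
noncomputable def valSeqC {V A ι : Type*} [Fintype ι] (sat : ι → (V → A) → Prop)
    (l : List (V → A)) : ℝ :=
  (l.map (valC sat)).foldr min 1

/-- `maxValC sat ψi ψt` is the maximum, over all reconfiguration sequences from `ψi` to `ψt`
(finite sequences of assignments starting at `ψi`, ending at `ψt`, consecutive assignments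
differing on at most one vertex), of the minimum value along the sequence. -/
noncomputable def maxValC {V A ι : Type*} [Fintype ι] (sat : ι → (V → A) → Prop)
    (ψi ψt : V → A) : ℝ :=
  sSup {r : ℝ | ∃ l : List (V → A), l ≠ [] ∧ l.head? = some ψi ∧ l.getLast? = some ψt ∧
    l.Chain' adjOne ∧ r = valSeqC sat l}

/-- The squared alphabet of `A`: subsets of `A` of size one or two. -/
abbrev Sq (A : Type*) := {s : Finset A // 1 ≤ s.card ∧ s.card ≤ 2}

/-- The singleton element of the squared alphabet. -/
def sing {A : Type*} (a : A) : Sq A := ⟨{a}, by simp⟩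

/-- Satisfaction predicate of a `q`-ary constraint graph with hyperedges indexed by `ι`:
hyperedge `i` has scope `he i : Fin q → V` and constraint `hc i ⊆ Σ^q`. -/
def qSat {V A ι : Type*} (q : ℕ) (he : ι → Fin q → V) (hc : ι → Set (Fin q → A)) :
    ι → (V → A) → Prop :=
  fun i ψ => (fun j => ψ (he i j)) ∈ hc i

/-- Satisfaction predicate of the binary constraint graph `G'` of the q-CSP-to-2-CSP
construction: vertex set `V ⊕ ι`, alphabet `(Sq A)^q`, one edge `(he i j, i)` per pair
`(i, j) : ι × Fin q`, accepting `(a, b)` iff `a[1] ⊆ b[j]` and `b[1] × ⋯ × b[q] ⊆ hc i`. -/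
def bSat {V A ι : Type*} (q : ℕ) (hq : 0 < q) (he : ι → Fin q → V)
    (hc : ι → Set (Fin q → A)) :
    ι × Fin q → ((V ⊕ ι) → (Fin q → Sq A)) → Prop :=
  fun p ψ' =>
    (ψ' (Sum.inl (he p.1 p.2)) ⟨0, hq⟩).1 ⊆ (ψ' (Sum.inr p.1) p.2).1 ∧
    ∀ f : Fin q → A, (∀ k, f k ∈ (ψ' (Sum.inr p.1) k).1) → f ∈ hc p.1

/-- `ψ'` is compatible with `ψ`: `ψ'(v)[1] = {ψ(v)}` for every vertex `v`, and
`ψ'(e)[j] = {ψ(v_j)}` for every hyperedge `e = (v_1, …, v_q)` and coordinate `j`. -/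
def Compat {V A ι : Type*} (q : ℕ) (hq : 0 < q) (he : ι → Fin q → V)
    (ψ : V → A) (ψ' : (V ⊕ ι) → (Fin q → Sq A)) : Prop :=
  (∀ v : V, ψ' (Sum.inl v) ⟨0, hq⟩ = sing (ψ v)) ∧
  (∀ (i : ι) (j : Fin q), ψ' (Sum.inr i) j = sing (ψ (he i j)))


/-!
Decode an assignment `ψ'` of `G'` into the assignment of `G` that picks, at every vertex `v`,
some element of `ψ'(v)[1]`. If a hyperedge `e` is violated by the decoded assignment, then one
of its `q` edges in `G'` is violated: were all of them satisfied, the decoded values would lie in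
the boxes `ψ'(e)[j]`, whose product is contained in `π_e`. So the unsatisfied fraction grows by
a factor at most `q` under decoding. Decoding respects one-vertex moves, and it sends compatible
assignments to the ones they are compatible with, so every reconfiguration sequence of `G'` with
unsatisfied fraction `δ` decodes to one of `G` with unsatisfied fraction at most `q δ`.
-/

section Value

variable {V A ι : Type*} [Fintype ι] (sat : ι → (V → A) → Prop)

def IsReconfSeq (ψi ψt : V → A) (l : List (V → A)) : Prop :=
  l ≠ [] ∧ l.head? = some ψi ∧ l.getLast? = some ψt ∧ l.IsChain adjOne

lemma IsReconfSeq.map {V' A' : Type*} {f : (V → A) → (V' → A')}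
    (hf : ∀ ψ φ, adjOne ψ φ → adjOne (f ψ) (f φ)) {ψi ψt : V → A} {l : List (V → A)}
    (hl : IsReconfSeq ψi ψt l) : IsReconfSeq (f ψi) (f ψt) (l.map f) := by
  obtain ⟨hne, hhead, hlast, hchain⟩ := hl
  exact ⟨by simpa using hne, by simp [hhead], by simp [List.getLast?_map, hlast],
    List.isChain_map_of_isChain f hf hchain⟩

lemma valC_nonneg (ψ : V → A) : 0 ≤ valC sat ψ := by
  unfold valC
  positivity

lemma one_sub_valC [Nonempty ι] (ψ : V → A) :
    1 - valC sat ψ = Nat.card {i // ¬ sat i ψ} / Fintype.card ι := by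
  classical
  have hcard : (Fintype.card ι : ℝ) ≠ 0 := by exact_mod_cast Fintype.card_ne_zero
  rw [valC, Nat.card_eq_fintype_card, Nat.card_eq_fintype_card, Fintype.card_subtype_compl,
    Nat.cast_sub (Fintype.card_subtype_le _)]
  field_simp

lemma valSeqC_cons (ψ : V → A) (l : List (V → A)) :
    valSeqC sat (ψ :: l) = min (valC sat ψ) (valSeqC sat l) := rfl

lemma valSeqC_nonneg (l : List (V → A)) : 0 ≤ valSeqC sat l := by
  induction l with
  | nil => simp [valSeqC]
  | cons ψ l ih => exact le_min (valC_nonneg sat ψ) ih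

lemma valSeqC_le_one (l : List (V → A)) : valSeqC sat l ≤ 1 := by
  induction l with
  | nil => simp [valSeqC]
  | cons ψ l ih => exact min_le_of_right_le ih

lemma valSeqC_le_maxValC {ψi ψt : V → A} {l : List (V → A)} (hl : IsReconfSeq ψi ψt l) :
    valSeqC sat l ≤ maxValC sat ψi ψt := by
  refine le_csSup ⟨1, ?_⟩ ⟨l, hl.1, hl.2.1, hl.2.2.1, hl.2.2.2, rfl⟩
  rintro _ ⟨l', -, -, -, -, rfl⟩
  exact valSeqC_le_one sat l'

lemma maxValC_le {ψi ψt : V → A} {a : ℝ} (ha : 0 ≤ a)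
    (h : ∀ l, IsReconfSeq ψi ψt l → valSeqC sat l ≤ a) : maxValC sat ψi ψt ≤ a := by
  refine Real.sSup_le ?_ ha
  rintro _ ⟨l, hne, hhead, hlast, hchain, rfl⟩
  exact h l ⟨hne, hhead, hlast, hchain⟩

lemma maxValC_nonneg (ψi ψt : V → A) : 0 ≤ maxValC sat ψi ψt := by
  refine Real.sSup_nonneg ?_
  rintro _ ⟨l, -, -, -, -, rfl⟩
  exact valSeqC_nonneg sat l

variable {V' A' ι' : Type*} [Fintype ι'] {sat' : ι' → (V' → A') → Prop} {c : ℝ}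
  {f : (V' → A') → (V → A)}

lemma one_sub_valSeqC_map_le (hc : 0 ≤ c)
    (hf : ∀ ψ', 1 - valC sat (f ψ') ≤ c * (1 - valC sat' ψ')) (l : List (V' → A')) :
    1 - valSeqC sat (l.map f) ≤ c * (1 - valSeqC sat' l) := by
  induction l with
  | nil => simp [valSeqC]
  | cons ψ' l ih =>
    rw [List.map_cons, valSeqC_cons, valSeqC_cons, ← max_sub_sub_left]
    exact max_le ((hf ψ').trans (by gcongr; exact min_le_left _ _))
      (ih.trans (by gcongr; exact min_le_right _ _))

lemma one_sub_maxValC_map_le (hc : 1 ≤ c) (hadj : ∀ ψ φ, adjOne ψ φ → adjOne (f ψ) (f φ))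
    (hf : ∀ ψ', 1 - valC sat (f ψ') ≤ c * (1 - valC sat' ψ')) (ψi ψt : V' → A') :
    1 - maxValC sat (f ψi) (f ψt) ≤ c * (1 - maxValC sat' ψi ψt) := by
  have hc0 : 0 < c := one_pos.trans_le hc
  set m := maxValC sat (f ψi) (f ψt)
  suffices maxValC sat' ψi ψt ≤ 1 - (1 - m) / c by
    rw [le_sub_comm, div_le_iff₀ hc0] at this
    linarith
  have hm : 0 ≤ m := maxValC_nonneg sat _ _
  refine maxValC_le sat' ?_ fun l hl => ?_
  -- `maxValC` is `sSup ∅ = 0` when no reconfiguration sequence exists; this is why `1 ≤ c`.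
  · rw [sub_nonneg, div_le_one hc0]
    linarith
  · have hmap : 1 - m ≤ c * (1 - valSeqC sat' l) :=
      (sub_le_sub_left (valSeqC_le_maxValC sat (hl.map hadj)) 1).trans
        (one_sub_valSeqC_map_le sat hc0.le hf l)
    rw [le_sub_comm, div_le_iff₀ hc0]
    linarith

end Value

lemma card_subtype_le_card_subtype_prod {ι κ : Type*} [Finite (ι × κ)] {P : ι → Prop}
    {Q : ι × κ → Prop} (h : ∀ i, P i → ∃ j, Q (i, j)) :
    Nat.card {i // P i} ≤ Nat.card {p : ι × κ // Q p} := by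
  choose j hj using h
  refine Nat.card_le_card_of_injective (fun i => ⟨(i.1, j i.1 i.2), hj i.1 i.2⟩) ?_
  intro x y hxy
  exact Subtype.ext (congrArg (fun p : {p : ι × κ // Q p} => p.1.1) hxy)

section Decode

variable {V A ι : Type*} (q : ℕ) (hq : 0 < q)

noncomputable def pick (s : Sq A) : A := (Finset.card_pos.mp s.2.1).choose

lemma pick_mem (s : Sq A) : pick s ∈ s.1 := (Finset.card_pos.mp s.2.1).choose_spec

lemma pick_sing (a : A) : pick (sing a) = a := by
  simpa [sing] using pick_mem (sing a)

noncomputable def decode (ψ' : (V ⊕ ι) → (Fin q → Sq A)) : V → A :=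
  fun v => pick (ψ' (Sum.inl v) ⟨0, hq⟩)

variable {q hq}

lemma decode_of_compat {he : ι → Fin q → V} {ψ : V → A} {ψ' : (V ⊕ ι) → (Fin q → Sq A)}
    (h : Compat q hq he ψ ψ') : decode q hq ψ' = ψ := by
  funext v
  rw [decode, h.1 v, pick_sing]

/-- A move at a hyperedge vertex of `G'` does not change the decoded assignment, which then
moves trivially at an arbitrary vertex of `V`. -/
lemma adjOne_decode [Nonempty V] {ψ' φ' : (V ⊕ ι) → (Fin q → Sq A)} (h : adjOne ψ' φ') :
    adjOne (decode q hq ψ') (decode q hq φ') := by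
  obtain ⟨v₀, h⟩ := h
  cases v₀ with
  | inl w => exact ⟨w, fun v hv => by rw [decode, decode, h (Sum.inl v) (by simpa using hv)]⟩
  | inr i =>
    exact ⟨Classical.arbitrary V, fun v _ => by rw [decode, decode, h (Sum.inl v) (by simp)]⟩

variable {he : ι → Fin q → V} {hc : ι → Set (Fin q → A)}

lemma exists_not_bSat_of_not_qSat {ψ' : (V ⊕ ι) → (Fin q → Sq A)} {i : ι}
    (hi : ¬ qSat q he hc i (decode q hq ψ')) : ∃ j, ¬ bSat q hq he hc (i, j) ψ' := by
  by_contra! hsat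
  exact hi ((hsat ⟨0, hq⟩).2 _ fun k => (hsat k).1 (pick_mem _))

lemma one_sub_valC_decode_le [Fintype ι] [Nonempty ι] (ψ' : (V ⊕ ι) → (Fin q → Sq A)) :
    1 - valC (qSat q he hc) (decode q hq ψ') ≤ q * (1 - valC (bSat q hq he hc) ψ') := by
  have : Nonempty (Fin q) := ⟨⟨0, hq⟩⟩
  have hcard : (Nat.card {i // ¬ qSat q he hc i (decode q hq ψ')} : ℝ) ≤
      Nat.card {p // ¬ bSat q hq he hc p ψ'} := by
    exact_mod_cast card_subtype_le_card_subtype_prod fun i => exists_not_bSat_of_not_qSat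
  have hq' : (q : ℝ) ≠ 0 := by exact_mod_cast hq.ne'
  rw [one_sub_valC, one_sub_valC, Fintype.card_prod, Fintype.card_fin, Nat.cast_mul,
    ← div_div, mul_div_cancel₀ _ hq']
  gcongr

end Decode

/-- soundness of the q-CSP-to-2-CSP construction (with `E` indexed by a
nonempty `ι`): if `val_G(ψi ↭ ψt) < 1 − ε`, then for all compatible `ψ'i, ψ't`,
`val_{G'}(ψ'i ↭ ψ't) < 1 − ε/q`. -/
theorem qcsp_to_twocsp_soundness {V A ι : Type*}
    [Fintype ι] [Nonempty ι]
    (q : ℕ) (hq : 2 ≤ q) (he : ι → Fin q → V) (hc : ι → Set (Fin q → A))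
    (ε : ℝ)
    (ψi ψt : V → A)
    (hval : maxValC (qSat q he hc) ψi ψt < 1 - ε) :
    ∀ ψ'i ψ't : (V ⊕ ι) → (Fin q → Sq A),
      Compat q (by omega) he ψi ψ'i → Compat q (by omega) he ψt ψ't →
      maxValC (bSat q (by omega) he hc) ψ'i ψ't < 1 - ε / (q : ℝ) := by
  intro ψ'i ψ't hci hct
  have hq0 : 0 < q := by omega
  have : Nonempty V := ⟨he (Classical.arbitrary ι) ⟨0, hq0⟩⟩
  have hgap := one_sub_maxValC_map_le (qSat q he hc) (sat' := bSat q hq0 he hc) (c := q)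
    (by exact_mod_cast hq0) (fun _ _ => adjOne_decode) one_sub_valC_decode_le ψ'i ψ't
  rw [decode_of_compat hci, decode_of_compat hct] at hgap
  rw [lt_sub_comm, div_lt_iff₀ (by exact_mod_cast hq0)]
  linarith
end

section
/- Let ε ∈ (0,1), and let G = (V, E, Σ, Π) be a constraint graph whose underlying graph is d-regular with adjacency matrix A satisfying λ(A) ≤ λ, where λ > 0, λ/d ≤ ε/3, and |V| ≥ d²/λ². Let ψ^ini and ψ^tar be satisfying assignments for G and set ε' = ε² · (d/(d + λ)) · (1 − 3λ/(εd)). If val_G(ψ^ini ↭ ψ^tar) < ε', then every reconfiguration sequence of covers from C_{ψ^ini} to C_{ψ^tar} in the Lund–Yannakakis system contains a cover C with |C| > (2 − ε)(|V| + 1). -/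
/-- For a real square matrix `M` indexed by a finite set `V`, `matLambda M` denotes
`sup {‖Mx‖₂ / ‖x‖₂ : x ∈ ℝ^V, x ≠ 0, ∑ v, x v = 0}`. -/
noncomputable def matLambda {V : Type*} [Fintype V] (M : Matrix V V ℝ) : ℝ :=
  sSup {r : ℝ | ∃ x : V → ℝ, x ≠ 0 ∧ (∑ v, x v) = 0 ∧
    r = Real.sqrt (∑ v, (M.mulVec x v) ^ 2) / Real.sqrt (∑ v, (x v) ^ 2)}
/-- The Lund–Yannakakis set `S_{v,α}` in the universe `E × B` (with `B = {0,1}^Σ` modeled as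
`A → Bool`): the union of `{e} × Q̄_α` over edges `e ∈ E` with first endpoint `v`, together
with `{e} × Q_{π_e⁻¹(α)}` over edges `e ∈ E` with second endpoint `v`. -/
def LYSet {V A : Type*} (E : Finset (V × V)) (π : V × V → Set (A × A)) (v : V) (α : A) :
    Set ((V × V) × (A → Bool)) :=
  {p | p.1 ∈ E ∧ ((p.1.1 = v ∧ p.2 α = false) ∨
    (p.1.2 = v ∧ ∃ γ, (γ, α) ∈ π p.1 ∧ p.2 γ = true))}

/-- `C ⊆ V × Σ` is a cover of the Lund–Yannakakis system: the sets `S_{v,α}` for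
`(v, α) ∈ C` cover the universe `E × B`. -/
def IsLYCover {V A : Type*} (E : Finset (V × V)) (π : V × V → Set (A × A))
    (C : Finset (V × A)) : Prop :=
  ∀ p : (V × V) × (A → Bool), p.1 ∈ E → ∃ va ∈ C, p ∈ LYSet E π va.1 va.2

/-!
Read an assignment off each cover `C`: a vertex carrying exactly one label in `C` takes that
label, every other vertex keeps its previous value. Every vertex carries a label, since its edges
must be covered, so `|C| ≤ (2 - ε)(|V| + 1)` leaves at least `ε|V| - 2` singly labelled vertices,
and the Lund–Yannakakis covering property makes every edge between two of them satisfied. By the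
expander mixing lemma these edges form a fraction at least `ε'` of `E`; here the spectral bound
tested on a single vertex gives `d ≤ 2λ²`, which pays for the loops in `|E| ≤ (d + 1)|V| / 2`.
Covers differing in one element yield assignments differing in at most one vertex, so a sequence
of small covers would give a reconfiguration sequence from `ψ^ini` to `ψ^tar` of value at least
`ε'`.
-/

open Matrix Finset

section Spectral

variable {V : Type*} [Fintype V] {M : Matrix V V ℝ} {lam : ℝ}

lemma matLambda_nonneg (M : Matrix V V ℝ) : 0 ≤ matLambda M :=
  Real.sSup_nonneg fun _ ⟨_, _, _, hr⟩ => hr ▸ by positivity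

lemma matLambda_bddAbove (M : Matrix V V ℝ) :
    BddAbove {r : ℝ | ∃ x : V → ℝ, x ≠ 0 ∧ (∑ v, x v) = 0 ∧
      r = Real.sqrt (∑ v, (M.mulVec x v) ^ 2) / Real.sqrt (∑ v, (x v) ^ 2)} := by
  refine ⟨Real.sqrt (∑ v, ∑ w, M v w ^ 2), ?_⟩
  rintro r ⟨x, -, -, rfl⟩
  refine div_le_of_le_mul₀ (Real.sqrt_nonneg _) (Real.sqrt_nonneg _) ?_
  rw [← Real.sqrt_mul (by positivity), sum_mul]
  refine Real.sqrt_le_sqrt (sum_le_sum fun v _ => ?_)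
  simpa [mulVec, dotProduct] using sum_mul_sq_le_sq_mul_sq univ (M v) x

lemma dotProduct_self_eq_sum_sq (x : V → ℝ) : x ⬝ᵥ x = ∑ v, x v ^ 2 := by
  simp [dotProduct, sq]

lemma mulVec_dotProduct_mulVec_le_of_matLambda_le (hM : matLambda M ≤ lam) {x : V → ℝ}
    (hx : x ⬝ᵥ 1 = 0) : (M *ᵥ x) ⬝ᵥ (M *ᵥ x) ≤ lam ^ 2 * (x ⬝ᵥ x) := by
  rcases eq_or_ne x 0 with rfl | hx0
  · simp
  rw [dotProduct_self_eq_sum_sq, dotProduct_self_eq_sum_sq]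
  have hx2 : 0 < Real.sqrt (∑ v, x v ^ 2) := Real.sqrt_pos.2 <| by
    obtain ⟨v, hv⟩ := Function.ne_iff.1 hx0
    exact sum_pos' (fun _ _ => sq_nonneg _) ⟨v, mem_univ _, sq_pos_of_ne_zero hv⟩
  have hratio := (le_csSup (matLambda_bddAbove M) ⟨x, hx0, by rwa [← dotProduct_one], rfl⟩).trans hM
  rw [div_le_iff₀ hx2] at hratio
  have := pow_le_pow_left₀ (Real.sqrt_nonneg _) hratio 2
  rwa [mul_pow, Real.sq_sqrt (by positivity), Real.sq_sqrt (by positivity)] at this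

lemma neg_mul_le_dotProduct_mulVec_of_matLambda_le (hM : matLambda M ≤ lam) {x : V → ℝ}
    (hx : x ⬝ᵥ 1 = 0) : -(lam * (x ⬝ᵥ x)) ≤ x ⬝ᵥ (M *ᵥ x) := by
  have hlam : 0 ≤ lam := (matLambda_nonneg M).trans hM
  have hxx : 0 ≤ x ⬝ᵥ x := by rw [dotProduct_self_eq_sum_sq]; positivity
  refine (abs_le_of_sq_le_sq' ?_ (by positivity)).1
  calc (x ⬝ᵥ (M *ᵥ x)) ^ 2 ≤ (x ⬝ᵥ x) * ((M *ᵥ x) ⬝ᵥ (M *ᵥ x)) := by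
        rw [dotProduct_self_eq_sum_sq, dotProduct_self_eq_sum_sq]
        exact sum_mul_sq_le_sq_mul_sq univ x (M *ᵥ x)
    _ ≤ (x ⬝ᵥ x) * (lam ^ 2 * (x ⬝ᵥ x)) := by
        gcongr; exact mulVec_dotProduct_mulVec_le_of_matLambda_le hM hx
    _ = (lam * (x ⬝ᵥ x)) ^ 2 := by ring

/-- The lower half of the expander mixing lemma. -/
lemma le_sum_sum_of_matLambda_le {d : ℝ} (hrow : ∀ v, ∑ w, M v w = d)
    (hcol : ∀ w, ∑ v, M v w = d) (hM : matLambda M ≤ lam) (S : Finset V) :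
    d * (S.card : ℝ) ^ 2 / Fintype.card V - lam * S.card ≤ ∑ v ∈ S, ∑ w ∈ S, M v w := by
  classical
  rcases isEmpty_or_nonempty V with hV | hV
  · simp [eq_empty_of_isEmpty S]
  set n : ℝ := (Fintype.card V : ℝ)
  have hn : n ≠ 0 := by positivity
  set s : ℝ := (S.card : ℝ)
  set ind : V → ℝ := fun v => if v ∈ S then 1 else 0
  have hind1 : ind ⬝ᵥ 1 = s := by simp [ind, dotProduct, s]
  have hindind : ind ⬝ᵥ ind = s := by simp [ind, dotProduct, s]
  have hQ : ind ⬝ᵥ (M *ᵥ ind) = ∑ v ∈ S, ∑ w ∈ S, M v w := by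
    simp [ind, dotProduct, mulVec, sum_ite_mem]
  have hM1 : M *ᵥ 1 = d • 1 := funext fun v => by simp [mulVec, dotProduct, hrow]
  have h1M : 1 ⬝ᵥ (M *ᵥ ind) = d * s := by
    have : 1 ᵥ* M = d • 1 := funext fun w => by simp [vecMul, dotProduct, hcol]
    rw [dotProduct_mulVec, this, smul_dotProduct, dotProduct_comm, hind1, smul_eq_mul]
  set x : V → ℝ := ind - (s / n) • 1 with hx
  have hx1 : x ⬝ᵥ 1 = 0 := by
    rw [hx, sub_dotProduct, smul_dotProduct, hind1, one_dotProduct_one, smul_eq_mul,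
      div_mul_cancel₀ _ hn, sub_self]
  have hxMx : x ⬝ᵥ (M *ᵥ x) = ∑ v ∈ S, ∑ w ∈ S, M v w - d * s ^ 2 / n := by
    simp only [hx, mulVec_sub, mulVec_smul, hM1, sub_dotProduct, dotProduct_sub, smul_dotProduct,
      dotProduct_smul, hind1, one_dotProduct_one, hQ, h1M, smul_eq_mul]
    field_simp
    ring
  have hxx : x ⬝ᵥ x = s - s ^ 2 / n := by
    simp only [hx, sub_dotProduct, dotProduct_sub, smul_dotProduct, dotProduct_smul,
      hind1, one_dotProduct_one, hindind, dotProduct_comm 1 ind, smul_eq_mul]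
    field_simp
    ring
  have hmix := neg_mul_le_dotProduct_mulVec_of_matLambda_le hM hx1
  rw [hxMx, hxx] at hmix
  have : 0 ≤ s ^ 2 / n := by positivity
  nlinarith [(matLambda_nonneg M).trans hM]

lemma sum_col_sq_sub_le_of_matLambda_le {d : ℝ} (hrow : ∀ v, ∑ w, M v w = d)
    (hcol : ∀ w, ∑ v, M v w = d) (hM : matLambda M ≤ lam) (v : V) :
    ∑ w, M w v ^ 2 - d ^ 2 / Fintype.card V ≤ lam ^ 2 := by
  classical
  have : Nonempty V := ⟨v⟩
  set n : ℝ := (Fintype.card V : ℝ)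
  have hn : 0 < n := by positivity
  have hM1 : M *ᵥ 1 = d • 1 := funext fun v => by simp [mulVec, dotProduct, hrow]
  have hcol1 : M.col v ⬝ᵥ 1 = d := by simp [dotProduct, hcol]
  set x : V → ℝ := Pi.single v 1 - (1 / n) • 1 with hx
  have hx1 : x ⬝ᵥ 1 = 0 := by
    rw [hx, sub_dotProduct, smul_dotProduct, one_dotProduct_one, single_one_dotProduct]
    simp [n, hn.ne']
  have hMx : (M *ᵥ x) ⬝ᵥ (M *ᵥ x) = ∑ w, M w v ^ 2 - d ^ 2 / n := by
    rw [hx, mulVec_sub, mulVec_smul, hM1, mulVec_single_one]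
    simp only [sub_dotProduct, dotProduct_sub, smul_dotProduct, dotProduct_smul, hcol1,
      one_dotProduct_one, dotProduct_comm 1 (M.col v), smul_eq_mul, dotProduct_self_eq_sum_sq]
    field_simp
    simp only [col, transpose_apply]
    ring
  have hxx : x ⬝ᵥ x ≤ 1 := by
    nth_rewrite 2 [hx]
    rw [dotProduct_sub, dotProduct_smul, hx1, dotProduct_single_one, smul_zero, sub_zero, hx]
    simp only [Pi.sub_apply, Pi.single_eq_same, Pi.smul_apply, Pi.one_apply, smul_eq_mul, mul_one]
    exact sub_le_self _ (by positivity)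
  have := mulVec_dotProduct_mulVec_le_of_matLambda_le hM hx1
  rw [hMx] at this
  exact this.trans (mul_le_of_le_one_right (sq_nonneg _) hxx)

end Spectral

section Graph

variable {V : Type*} [DecidableEq V] (E : Finset (V × V))

noncomputable def adjMatrixOfEdges : Matrix V V ℝ :=
  Matrix.of fun v w => ((E.filter fun e => e = (v, w) ∨ e = (w, v)).card : ℝ)

lemma adjMatrixOfEdges_comm (v w : V) : adjMatrixOfEdges E v w = adjMatrixOfEdges E w v := by
  simp only [adjMatrixOfEdges, Matrix.of_apply, or_comm]

lemma sum_adjMatrixOfEdges_row [Fintype V] (v : V) :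
    ∑ w, adjMatrixOfEdges E v w = (E.filter fun e => e.1 = v ∨ e.2 = v).card := by
  -- group the edges at `v` by their other endpoint
  have hfib := card_eq_sum_card_fiberwise (s := E.filter fun e : V × V => e.1 = v ∨ e.2 = v)
    (t := univ) (f := fun e : V × V => if e.1 = v then e.2 else e.1) fun _ _ => mem_univ _
  rw [hfib, Nat.cast_sum]
  refine sum_congr rfl fun w _ => congrArg (Nat.cast ∘ card) ?_
  rw [filter_filter]
  refine filter_congr fun e _ => ?_
  obtain ⟨a, b⟩ := e
  grind

lemma sum_adjMatrixOfEdges_col [Fintype V] (w : V) :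
    ∑ v, adjMatrixOfEdges E v w = (E.filter fun e => e.1 = w ∨ e.2 = w).card := by
  simp only [adjMatrixOfEdges_comm E _ w, sum_adjMatrixOfEdges_row]

lemma sum_sum_adjMatrixOfEdges_le [Fintype V] (S : Finset V) :
    ∑ v ∈ S, ∑ w ∈ S, adjMatrixOfEdges E v w ≤
      2 * ((E.filter fun e => e.1 ∈ S ∧ e.2 ∈ S).card : ℝ) := by
  have hpairs : ∑ v ∈ S, ∑ w ∈ S, ((E.filter (· = (v, w))).card : ℝ) =
      (E.filter fun e => e.1 ∈ S ∧ e.2 ∈ S).card := by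
    rw [← sum_product' (f := fun v w => ((E.filter (· = (v, w))).card : ℝ))]
    have hE : E.filter (fun e => e.1 ∈ S ∧ e.2 ∈ S) = (S ×ˢ S).filter (· ∈ E) := by
      ext; simp [and_comm]
    rw [hE, card_filter, Nat.cast_sum]
    refine sum_congr rfl fun p _ => ?_
    rw [filter_eq']
    split_ifs <;> simp
  calc ∑ v ∈ S, ∑ w ∈ S, adjMatrixOfEdges E v w
      ≤ ∑ v ∈ S, ∑ w ∈ S, (((E.filter (· = (v, w))).card : ℝ) + (E.filter (· = (w, v))).card) := by
        gcongr with v _ w _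
        rw [adjMatrixOfEdges, Matrix.of_apply, filter_or]
        exact_mod_cast card_union_le _ _
    _ = 2 * ((E.filter fun e => e.1 ∈ S ∧ e.2 ∈ S).card : ℝ) := by
        rw [two_mul, ← hpairs]
        simp only [sum_add_distrib]
        rw [sum_comm (s := S) (t := S) (f := fun v w => ((E.filter (· = (w, v))).card : ℝ))]

lemma two_mul_card_le_sum_degree_add_card [Fintype V] :
    2 * E.card ≤ ∑ v, (E.filter fun e => e.1 = v ∨ e.2 = v).card + Fintype.card V := by
  -- a loop has a single endpoint, and `E` holds at most one loop at each vertex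
  have hswap (p : V × V → V → Prop) [∀ e v, Decidable (p e v)] :
      ∑ v, (E.filter (p · v)).card = ∑ e ∈ E, (univ.filter (p e)).card := by
    simp only [card_filter]
    exact sum_comm
  have hloops : ∑ v, (E.filter fun e => e.1 = v ∧ e.2 = v).card ≤ Fintype.card V := by
    calc ∑ v, (E.filter fun e => e.1 = v ∧ e.2 = v).card ≤ ∑ _v : V, 1 :=
          sum_le_sum fun v _ => card_le_one.2 fun e he e' he' => by grind
      _ = Fintype.card V := by simp
  have hends (e : V × V) : (univ.filter fun v => e.1 = v ∨ e.2 = v).card +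
      (univ.filter fun v => e.1 = v ∧ e.2 = v).card = 2 := by
    rw [filter_or, filter_and, card_union_add_card_inter]
    simp [filter_eq]
  calc 2 * E.card = ∑ e ∈ E, ((univ.filter fun v => e.1 = v ∨ e.2 = v).card +
        (univ.filter fun v => e.1 = v ∧ e.2 = v).card) := by simp [hends, mul_comm]
    _ ≤ _ := by rw [sum_add_distrib, ← hswap, ← hswap]; gcongr

variable {E} {d : ℕ}

lemma exists_mem_incident_of_regular (hd : 1 ≤ d)
    (hreg : ∀ v : V, (E.filter fun e => e.1 = v ∨ e.2 = v).card = d) (v : V) :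
    ∃ e ∈ E, e.1 = v ∨ e.2 = v := by
  obtain ⟨e, he⟩ := card_pos.1 (by rw [hreg v]; omega : 0 < (E.filter _).card)
  exact ⟨e, (mem_filter.1 he).1, (mem_filter.1 he).2⟩

variable [Fintype V]

lemma sum_adjMatrixOfEdges_row_of_regular
    (hreg : ∀ v : V, (E.filter fun e => e.1 = v ∨ e.2 = v).card = d) (v : V) :
    ∑ w, adjMatrixOfEdges E v w = d := by
  rw [sum_adjMatrixOfEdges_row, hreg]

lemma sum_adjMatrixOfEdges_col_of_regular
    (hreg : ∀ v : V, (E.filter fun e => e.1 = v ∨ e.2 = v).card = d) (w : V) :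
    ∑ v, adjMatrixOfEdges E v w = d := by
  rw [sum_adjMatrixOfEdges_col, hreg]

lemma two_mul_card_le_of_regular (hreg : ∀ v : V, (E.filter fun e => e.1 = v ∨ e.2 = v).card = d) :
    2 * (E.card : ℝ) ≤ (d + 1) * Fintype.card V := by
  have := two_mul_card_le_sum_degree_add_card E
  simp only [hreg, sum_const, card_univ, smul_eq_mul] at this
  rw [add_one_mul, mul_comm (d : ℝ)]
  exact_mod_cast this

lemma natCast_le_two_mul_sq_of_matLambda_le [Nonempty V] {lam : ℝ} (hlam0 : 0 < lam)
    (hreg : ∀ v : V, (E.filter fun e => e.1 = v ∨ e.2 = v).card = d)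
    (hA : matLambda (adjMatrixOfEdges E) ≤ lam) (hV : (d : ℝ) ^ 2 / lam ^ 2 ≤ Fintype.card V) :
    (d : ℝ) ≤ 2 * lam ^ 2 := by
  obtain ⟨v⟩ := ‹Nonempty V›
  have hcol := sum_col_sq_sub_le_of_matLambda_le (sum_adjMatrixOfEdges_row_of_regular hreg)
    (sum_adjMatrixOfEdges_col_of_regular hreg) hA v
  have hsq : (d : ℝ) ≤ ∑ w, adjMatrixOfEdges E w v ^ 2 := by
    rw [← sum_adjMatrixOfEdges_col_of_regular hreg v]
    refine sum_le_sum fun w _ => ?_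
    simp only [adjMatrixOfEdges, Matrix.of_apply]
    exact_mod_cast Nat.le_self_pow two_ne_zero _
  have hn : (0 : ℝ) < Fintype.card V := by positivity
  rcases le_or_gt (2 * (d : ℝ)) (Fintype.card V) with hdn | hdn
  · have : (d : ℝ) ^ 2 / Fintype.card V ≤ d / 2 := by
      rw [div_le_iff₀ hn]; nlinarith
    linarith
  · rw [div_le_iff₀ (by positivity)] at hV
    nlinarith

end Graph

lemma soundness_ineq_normalized {ε t x : ℝ} (hε1 : ε < 1) (ht0 : 0 < t) (ht : 3 * t ≤ ε)
    (hx : ε - 2 * t ^ 2 ≤ x) :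
    ε * (ε - 3 * t) * (1 + 2 * t ^ 2) ≤ (1 + t) * (x * (x - t)) := by
  have hε0 : 0 < ε := by linarith
  set y := ε - 2 * t ^ 2
  have hy : ε * (ε - 3 * t) * (1 + 2 * t ^ 2) ≤ (1 + t) * (y * (y - t)) := by
    have hexpand : (1 + t) * (y * (y - t)) - ε * (ε - 3 * t) * (1 + 2 * t ^ 2) =
        t * ((ε ^ 2 + 2 * ε - (5 * ε + 2 * ε ^ 2) * t) + (2 + 2 * ε) * t ^ 2 + 6 * t ^ 3 +
          4 * t ^ 4) := by ring
    have hlin : 0 ≤ ε ^ 2 + 2 * ε - (5 * ε + 2 * ε ^ 2) * t := by nlinarith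
    have : 0 ≤ (1 + t) * (y * (y - t)) - ε * (ε - 3 * t) * (1 + 2 * t ^ 2) := by
      rw [hexpand]; positivity
    linarith
  -- x (x - t) - y (y - t) = (x - y) (x + y - t)
  have hmono : y * (y - t) ≤ x * (x - t) := by
    have : 0 ≤ x + y - t := by nlinarith
    nlinarith [mul_nonneg (sub_nonneg.2 hx) this]
  calc _ ≤ (1 + t) * (y * (y - t)) := hy
    _ ≤ (1 + t) * (x * (x - t)) := by gcongr

lemma soundness_ineq {ε d lam n s m : ℝ} (hε1 : ε < 1) (hd : 0 < d) (hlam0 : 0 < lam)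
    (hlam : lam / d ≤ ε / 3) (hdlam : d ≤ 2 * lam ^ 2) (hn : d ^ 2 / lam ^ 2 ≤ n)
    (hs : ε * n - 2 ≤ s) (hm : 2 * m ≤ (d + 1) * n) :
    ε ^ 2 * (d / (d + lam)) * (1 - 3 * lam / (ε * d)) * m ≤ (d * s ^ 2 / n - lam * s) / 2 := by
  obtain ⟨t, rfl⟩ : ∃ t, lam = t * d := ⟨lam / d, by field_simp⟩
  have ht0 : 0 < t := pos_of_mul_pos_left hlam0 hd.le
  have ht : 3 * t ≤ ε := by
    rw [mul_div_cancel_right₀ _ hd.ne'] at hlam; linarith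
  have hε0 : 0 < ε := by linarith
  have hn0 : 0 < n := lt_of_lt_of_le (by positivity) hn
  obtain ⟨x, rfl⟩ : ∃ x, s = x * n := ⟨s / n, by field_simp⟩
  have hdt : 1 ≤ 2 * t ^ 2 * d := by nlinarith
  have hnt : 1 ≤ n * t ^ 2 := by
    rw [mul_pow, div_le_iff₀ (by positivity)] at hn
    exact le_of_mul_le_mul_right (by linarith) (pow_pos hd 2)
  have hx : ε - 2 * t ^ 2 ≤ x := le_of_mul_le_mul_right (by nlinarith) hn0
  have hε' : ε ^ 2 * (d / (d + t * d)) * (1 - 3 * (t * d) / (ε * d)) =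
      ε * (ε - 3 * t) / (1 + t) := by
    field_simp
  have hrhs : d * (x * n) ^ 2 / n - t * d * (x * n) = d * n * (x * (x - t)) := by
    field_simp
  have hcoef : 0 ≤ ε * (ε - 3 * t) / (1 + t) :=
    div_nonneg (mul_nonneg hε0.le (by linarith)) (by positivity)
  rw [hε', hrhs]
  calc ε * (ε - 3 * t) / (1 + t) * m ≤ ε * (ε - 3 * t) / (1 + t) * ((d + 1) * n / 2) :=
        mul_le_mul_of_nonneg_left (by linarith) hcoef
    _ ≤ ε * (ε - 3 * t) / (1 + t) * ((1 + 2 * t ^ 2) * d * n / 2) :=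
        mul_le_mul_of_nonneg_left (by nlinarith) hcoef
    _ = ε * (ε - 3 * t) * (1 + 2 * t ^ 2) / (1 + t) * (d * n) / 2 := by ring
    _ ≤ (1 + t) * (x * (x - t)) / (1 + t) * (d * n) / 2 := by
        gcongr ?_ / _ * _ / _
        exact soundness_ineq_normalized hε1 ht0 ht hx
    _ = d * n * (x * (x - t)) / 2 := by field_simp

section Cover

variable {V A : Type*} {E : Finset (V × V)} {π : V × V → Set (A × A)} {C : Finset (V × A)}

lemma IsLYCover.exists_labels (hC : IsLYCover E π C) {e : V × V} (he : e ∈ E) :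
    ∃ α β, (e.1, α) ∈ C ∧ (e.2, β) ∈ C ∧ (α, β) ∈ π e := by
  classical
  -- the string marking the labels of `e.1` in `C` lies in no `S_{e.1, α}` with `(e.1, α) ∈ C`,
  -- so it is covered from the side of `e.2`
  obtain ⟨⟨v, α⟩, hαC, -, ⟨rfl, hα⟩ | ⟨rfl, γ, hγα, hγ⟩⟩ :=
    hC (e, fun γ => decide ((e.1, γ) ∈ C)) he
  · exact absurd hαC (by simpa using hα)
  · exact ⟨γ, α, by simpa using hγ, hαC, hγα⟩

lemma IsLYCover.exists_label (hC : IsLYCover E π C) {v : V}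
    (hv : ∃ e ∈ E, e.1 = v ∨ e.2 = v) : ∃ α, (v, α) ∈ C := by
  obtain ⟨e, he, rfl | rfl⟩ := hv <;> obtain ⟨α, β, hα, hβ, -⟩ := hC.exists_labels he
  exacts [⟨α, hα⟩, ⟨β, hβ⟩]

open Classical in
noncomputable def readOff (C : Finset (V × A)) (ψ : V → A) (v : V) : A :=
  if h : ∃! α, (v, α) ∈ C then h.exists.choose else ψ v

lemma readOff_mem {v : V} (h : ∃! α, (v, α) ∈ C) (ψ : V → A) : (v, readOff C ψ v) ∈ C := by
  rw [readOff, dif_pos h]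
  exact h.exists.choose_spec

lemma readOff_eq_of_existsUnique {v : V} {α : A} (h : ∃! α, (v, α) ∈ C) (hα : (v, α) ∈ C)
    (ψ : V → A) : readOff C ψ v = α :=
  h.unique (readOff_mem h ψ) hα

lemma readOff_of_not_existsUnique {v : V} (h : ¬∃! α, (v, α) ∈ C) (ψ : V → A) :
    readOff C ψ v = ψ v := by
  rw [readOff, dif_neg h]

lemma readOff_graph [Fintype V] [DecidableEq V] [DecidableEq A] (χ ψ : V → A) :
    readOff (univ.image fun v => (v, χ v)) ψ = χ := by
  funext v
  have hmem (α : A) : (v, α) ∈ univ.image (fun v => (v, χ v)) ↔ α = χ v := by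
    simp [eq_comm]
  exact readOff_eq_of_existsUnique ⟨χ v, (hmem _).2 rfl, fun β => (hmem β).1⟩ ((hmem _).2 rfl) ψ

lemma readOff_readOff_apply {C' : Finset (V × A)} {v : V} (hv : ∀ α, (v, α) ∈ C' ↔ (v, α) ∈ C)
    (ψ : V → A) : readOff C' (readOff C ψ) v = readOff C ψ v := by
  by_cases h : ∃! α, (v, α) ∈ C
  · exact readOff_eq_of_existsUnique ((existsUnique_congr hv).2 h) ((hv _).2 (readOff_mem h ψ)) _
  · exact readOff_of_not_existsUnique (mt (existsUnique_congr hv).1 h) _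

lemma adjOne_readOff_readOff [Nonempty V] [DecidableEq V] [DecidableEq A] {C' : Finset (V × A)}
    (h : ((C \ C') ∪ (C' \ C)).card ≤ 1) (ψ : V → A) :
    adjOne (readOff C ψ) (readOff C' (readOff C ψ)) := by
  obtain ⟨v₀, hv₀⟩ : ∃ v₀, ∀ p ∈ (C \ C') ∪ (C' \ C), p.1 = v₀ := by
    rcases ((C \ C') ∪ (C' \ C)).eq_empty_or_nonempty with hD | ⟨p, hp⟩
    · exact ⟨Classical.arbitrary V, by simp [hD]⟩
    · exact ⟨p.1, fun q hq => by rw [card_le_one.1 h q hq p hp]⟩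
  refine ⟨v₀, fun v hv => (readOff_readOff_apply (fun α => ?_) ψ).symm⟩
  by_contra hα
  exact hv (hv₀ (v, α) (by simp only [mem_union, mem_sdiff]; tauto))

open Classical in
noncomputable def singlyLabelled [Fintype V] (C : Finset (V × A)) : Finset V :=
  univ.filter fun v => ∃! α, (v, α) ∈ C

lemma mem_singlyLabelled [Fintype V] {v : V} : v ∈ singlyLabelled C ↔ ∃! α, (v, α) ∈ C := by
  simp [singlyLabelled]

lemma two_mul_card_le_card_add_card_singlyLabelled [Fintype V]
    (hC : ∀ v, ∃ α, (v, α) ∈ C) :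
    2 * Fintype.card V ≤ C.card + (singlyLabelled C).card := by
  classical
  have hvertex (v : V) :
      2 ≤ (C.filter (·.1 = v)).card + if v ∈ singlyLabelled C then 1 else 0 := by
    obtain ⟨α, hα⟩ := hC v
    have hpos : 0 < (C.filter (·.1 = v)).card := card_pos.2 ⟨(v, α), mem_filter.2 ⟨hα, rfl⟩⟩
    by_cases hu : v ∈ singlyLabelled C
    · simp only [hu, if_true]; omega
    · have : 1 < (C.filter (·.1 = v)).card := by
        by_contra! hle
        refine hu (mem_singlyLabelled.2 ⟨α, hα, fun β hβ => ?_⟩)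
        simpa using card_le_one.1 hle (v, β) (mem_filter.2 ⟨hβ, rfl⟩) (v, α)
          (mem_filter.2 ⟨hα, rfl⟩)
      simp only [hu, if_false]; omega
  calc 2 * Fintype.card V = ∑ _v : V, 2 := by simp [mul_comm]
    _ ≤ ∑ v, ((C.filter (·.1 = v)).card + if v ∈ singlyLabelled C then 1 else 0) :=
        sum_le_sum fun v _ => hvertex v
    _ = C.card + (singlyLabelled C).card := by
        rw [sum_add_distrib, sum_boole,
          card_eq_sum_card_fiberwise (f := Prod.fst) (t := univ) fun _ _ => mem_univ _]
        simp

lemma IsLYCover.readOff_mem_of_singlyLabelled [Fintype V] (hC : IsLYCover E π C) {e : V × V}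
    (he : e ∈ E) (h₁ : e.1 ∈ singlyLabelled C) (h₂ : e.2 ∈ singlyLabelled C) (ψ : V → A) :
    (readOff C ψ e.1, readOff C ψ e.2) ∈ π e := by
  obtain ⟨α, β, hα, hβ, hαβ⟩ := hC.exists_labels he
  rwa [readOff_eq_of_existsUnique (mem_singlyLabelled.1 h₁) hα,
    readOff_eq_of_existsUnique (mem_singlyLabelled.1 h₂) hβ]

end Cover

section Sequence
variable {V A : Type*}

noncomputable def readOffSeq (ψ : V → A) : List (Finset (V × A)) → List (V → A)
  | [] => []
  | C :: l => readOff C ψ :: readOffSeq (readOff C ψ) l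

lemma mem_readOffSeq {ψ φ : V → A} {l : List (Finset (V × A))} (h : φ ∈ readOffSeq ψ l) :
    ∃ C ∈ l, ∃ ψ', φ = readOff C ψ' := by
  induction l generalizing ψ with
  | nil => simp [readOffSeq] at h
  | cons C l ih =>
    rcases List.mem_cons.1 h with rfl | h
    · exact ⟨C, List.mem_cons_self, ψ, rfl⟩
    · obtain ⟨C', hC', ψ', rfl⟩ := ih h
      exact ⟨C', List.mem_cons_of_mem _ hC', ψ', rfl⟩

lemma getLast?_readOffSeq {C : Finset (V × A)} (ψ : V → A) {l : List (Finset (V × A))}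
    (h : l.getLast? = some C) : ∃ ψ', (readOffSeq ψ l).getLast? = some (readOff C ψ') := by
  induction l generalizing ψ with
  | nil => simp at h
  | cons C₀ l ih =>
    cases l with
    | nil => exact ⟨ψ, by simp_all [readOffSeq]⟩
    | cons C₁ l =>
      obtain ⟨ψ', hψ'⟩ := ih (readOff C₀ ψ) (by simpa [List.getLast?_cons_cons] using h)
      exact ⟨ψ', by simpa [readOffSeq, List.getLast?_cons_cons] using hψ'⟩

lemma isChain_readOffSeq [Nonempty V] [DecidableEq V] [DecidableEq A] (ψ : V → A)
    {l : List (Finset (V × A))} (h : l.IsChain fun P Q => ((P \ Q) ∪ (Q \ P)).card ≤ 1) :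
    (readOffSeq ψ l).IsChain adjOne := by
  induction l generalizing ψ with
  | nil => exact List.isChain_nil
  | cons C₀ l ih =>
    cases l with
    | nil => exact List.isChain_singleton _
    | cons C₁ l =>
      obtain ⟨h₀₁, hl⟩ := List.isChain_cons_cons.1 h
      exact List.isChain_cons_cons.2 ⟨adjOne_readOff_readOff h₀₁ ψ, ih _ hl⟩

end Sequence

lemma List.le_foldr_min_iff {α : Type*} [LinearOrder α] {a b : α} {L : List α} :
    a ≤ L.foldr min b ↔ a ≤ b ∧ ∀ x ∈ L, a ≤ x := by
  induction L with
  | nil => simp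
  | cons x L ih => simp only [List.foldr_cons, le_min_iff, ih, List.forall_mem_cons]; tauto

section Value
variable {V A ι : Type*} [Fintype ι] {sat : ι → (V → A) → Prop}

lemma valC_le_one (ψ : V → A) : valC sat ψ ≤ 1 :=
  div_le_one_of_le₀ (by exact_mod_cast Nat.card_eq_fintype_card (α := ι) ▸ Finite.card_subtype_le _)
    (Nat.cast_nonneg _)

lemma le_maxValC {ψi ψt : V → A} {l : List (V → A)} (hl : l ≠ []) (hhead : l.head? = some ψi)
    (hlast : l.getLast? = some ψt) (hchain : l.IsChain adjOne) {r : ℝ}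
    (hr : ∀ ψ ∈ l, r ≤ valC sat ψ) : r ≤ maxValC sat ψi ψt := by
  have hbdd : BddAbove {r : ℝ | ∃ l : List (V → A), l ≠ [] ∧ l.head? = some ψi ∧
      l.getLast? = some ψt ∧ l.IsChain adjOne ∧ r = valSeqC sat l} :=
    ⟨1, by rintro _ ⟨l, -, -, -, -, rfl⟩; exact (List.le_foldr_min_iff.1 le_rfl).1⟩
  refine le_trans ?_ (le_csSup hbdd ⟨l, hl, hhead, hlast, hchain, rfl⟩)
  obtain ⟨ψ, hψ⟩ := List.exists_mem_of_ne_nil l hl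
  refine List.le_foldr_min_iff.2 ⟨(hr ψ hψ).trans (valC_le_one ψ), ?_⟩
  simpa using hr

end Value

lemma Finset.card_le_natCard_subtype {α : Type*} {s t : Finset α} {p : α → Prop} (hts : t ⊆ s)
    (hp : ∀ x ∈ t, p x) : t.card ≤ Nat.card {i : {x // x ∈ s} // p i.1} := by
  rw [← Nat.card_eq_finsetCard]
  exact Nat.card_le_card_of_injective (fun x : t => ⟨⟨x.1, hts x.2⟩, hp x.1 x.2⟩)
    fun x y h => Subtype.ext (congrArg (fun i => i.1.1) h)

section Soundness
variable {V A : Type*} [Fintype V] {E : Finset (V × V)} {π : V × V → Set (A × A)}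
  {C : Finset (V × A)}

lemma IsLYCover.sub_le_card_singlyLabelled (hC : IsLYCover E π C)
    (hE : ∀ v, ∃ e ∈ E, e.1 = v ∨ e.2 = v) :
    2 * (Fintype.card V : ℝ) - C.card ≤ (singlyLabelled C).card := by
  have := two_mul_card_le_card_add_card_singlyLabelled fun v => hC.exists_label (hE v)
  rw [sub_le_iff_le_add']
  exact_mod_cast this

lemma IsLYCover.card_filter_le_natCard_sat [DecidableEq V] (hC : IsLYCover E π C) (ψ : V → A) :
    (E.filter fun e => e.1 ∈ singlyLabelled C ∧ e.2 ∈ singlyLabelled C).card ≤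
      Nat.card {e : {x // x ∈ E} // (readOff C ψ e.1.1, readOff C ψ e.1.2) ∈ π e.1} :=
  card_le_natCard_subtype (filter_subset _ _) fun _ he =>
    hC.readOff_mem_of_singlyLabelled (mem_filter.1 he).1 (mem_filter.1 he).2.1
      (mem_filter.1 he).2.2 ψ

lemma IsLYCover.le_valC_readOff [DecidableEq V] [Nonempty V] {ε lam : ℝ} {d : ℕ} (hε1 : ε < 1)
    (hd : 1 ≤ d) (hlam0 : 0 < lam) (hlam : lam / d ≤ ε / 3)
    (hreg : ∀ v : V, (E.filter fun e => e.1 = v ∨ e.2 = v).card = d)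
    (hA : matLambda (adjMatrixOfEdges E) ≤ lam) (hV : (d : ℝ) ^ 2 / lam ^ 2 ≤ Fintype.card V)
    (hC : IsLYCover E π C) (hCcard : (C.card : ℝ) ≤ (2 - ε) * (Fintype.card V + 1))
    (ψ : V → A) :
    ε ^ 2 * (d / (d + lam)) * (1 - 3 * lam / (ε * d)) ≤
      valC (fun e : {x // x ∈ E} => fun ψ : V → A => (ψ e.1.1, ψ e.1.2) ∈ π e.1)
        (readOff C ψ) := by
  set U := singlyLabelled C
  have hd0 : (0 : ℝ) < d := by exact_mod_cast hd
  have hE := exists_mem_incident_of_regular hd hreg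
  have hEpos : (0 : ℝ) < E.card := by
    obtain ⟨e, he, -⟩ := hE (Classical.arbitrary V)
    exact_mod_cast card_pos.2 ⟨e, he⟩
  have hU : ε * Fintype.card V - 2 ≤ U.card := by
    have := hC.sub_le_card_singlyLabelled hE
    have : 0 < ε := by have := div_pos hlam0 hd0; linarith
    nlinarith
  have hmix := le_sum_sum_of_matLambda_le (sum_adjMatrixOfEdges_row_of_regular hreg)
    (sum_adjMatrixOfEdges_col_of_regular hreg) hA U
  have hnum := soundness_ineq hε1 hd0 hlam0 hlam
    (natCast_le_two_mul_sq_of_matLambda_le hlam0 hreg hA hV) hV hU (two_mul_card_le_of_regular hreg)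
  rw [valC, Fintype.card_coe, le_div_iff₀ hEpos]
  calc _ ≤ ((E.filter fun e => e.1 ∈ U ∧ e.2 ∈ U).card : ℝ) := by
        linarith [sum_sum_adjMatrixOfEdges_le E U]
    _ ≤ _ := by exact_mod_cast hC.card_filter_le_natCard_sat ψ

end Soundness

theorem setcover_reconf_soundness_general {V A : Type*} [Fintype V] [DecidableEq V]
    [DecidableEq A]
    (E : Finset (V × V)) (π : V × V → Set (A × A))
    (ε : ℝ) (hε1 : ε < 1)
    (d : ℕ) (hd : 1 ≤ d) (lam : ℝ) (hlam0 : 0 < lam) (hlam : lam / (d : ℝ) ≤ ε / 3)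
    (hreg : ∀ v : V, (E.filter fun e => e.1 = v ∨ e.2 = v).card = d)
    (hA : matLambda (Matrix.of fun v w : V =>
      ((E.filter fun e => e = (v, w) ∨ e = (w, v)).card : ℝ)) ≤ lam)
    (hV : ((d : ℝ) ^ 2) / lam ^ 2 ≤ (Fintype.card V : ℝ))
    (ψi ψt : V → A)
    (hval : maxValC (fun e : {x // x ∈ E} => fun ψ : V → A =>
        (ψ e.1.1, ψ e.1.2) ∈ π e.1) ψi ψt
      < ε ^ 2 * ((d : ℝ) / ((d : ℝ) + lam)) * (1 - 3 * lam / (ε * (d : ℝ)))) :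
    ∀ l : List (Finset (V × A)), l ≠ [] →
      l.head? = some (Finset.univ.image fun v => (v, ψi v)) →
      l.getLast? = some (Finset.univ.image fun v => (v, ψt v)) →
      l.Chain' (fun P Q => ((P \ Q) ∪ (Q \ P)).card ≤ 1) →
      (∀ C ∈ l, IsLYCover E π C) →
      ∃ C ∈ l, (2 - ε) * ((Fintype.card V : ℝ) + 1) < (C.card : ℝ) := by
  intro l hl hhead hlast hchain hcover
  by_contra! hsmall
  have : Nonempty V := Fintype.card_pos_iff.1 <| by
    have : (0 : ℝ) < Fintype.card V := lt_of_lt_of_le (by positivity) hV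
    exact_mod_cast this
  obtain ⟨C₀, l', rfl⟩ := List.exists_cons_of_ne_nil hl
  obtain ⟨ψ', hψ'⟩ := getLast?_readOffSeq ψi hlast
  refine hval.not_ge (le_maxValC (l := readOffSeq ψi (C₀ :: l')) (List.cons_ne_nil _ _) ?_ ?_
    (isChain_readOffSeq ψi hchain) fun φ hφ => ?_)
  · simp [readOffSeq, Option.some.inj hhead, readOff_graph]
  · rwa [readOff_graph] at hψ'
  · obtain ⟨C, hC, ψ, rfl⟩ := mem_readOffSeq hφ
    exact (hcover C hC).le_valC_readOff hε1 hd hlam0 hlam hreg hA hV (hsmall C hC) ψ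

/-- soundness of the reduction to Set Cover Reconfiguration.  Suppose the
underlying graph of `G` is `d`-regular with adjacency matrix `A` satisfying `λ(A) ≤ λ`,
`ε ∈ (0,1)`, `λ > 0`, `λ/d ≤ ε/3`, `|V| ≥ d²/λ²`, `ψi, ψt` are satisfying assignments and
`val_G(ψi ↭ ψt) < ε' = ε²·(d/(d+λ))·(1 − 3λ/(εd))`.  Then every reconfiguration sequence of
covers of the Lund–Yannakakis system from `C_{ψi}` to `C_{ψt}` contains a cover `C` with
`|C| > (2 − ε)(|V| + 1)`. -/
theorem setcover_reconf_soundness {V A : Type*} [Fintype V] [DecidableEq V]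
    [Fintype A] [DecidableEq A]
    (E : Finset (V × V)) (π : V × V → Set (A × A))
    (ε : ℝ) (hε0 : 0 < ε) (hε1 : ε < 1)
    (d : ℕ) (hd : 1 ≤ d) (lam : ℝ) (hlam0 : 0 < lam) (hlam : lam / (d : ℝ) ≤ ε / 3)
    (hreg : ∀ v : V, (E.filter fun e => e.1 = v ∨ e.2 = v).card = d)
    (hA : matLambda (Matrix.of fun v w : V =>
      ((E.filter fun e => e = (v, w) ∨ e = (w, v)).card : ℝ)) ≤ lam)
    (hV : ((d : ℝ) ^ 2) / lam ^ 2 ≤ (Fintype.card V : ℝ))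
    (ψi ψt : V → A)
    (hψi : ∀ e ∈ E, (ψi e.1, ψi e.2) ∈ π e) (hψt : ∀ e ∈ E, (ψt e.1, ψt e.2) ∈ π e)
    (hval : maxValC (fun e : {x // x ∈ E} => fun ψ : V → A =>
        (ψ e.1.1, ψ e.1.2) ∈ π e.1) ψi ψt
      < ε ^ 2 * ((d : ℝ) / ((d : ℝ) + lam)) * (1 - 3 * lam / (ε * (d : ℝ)))) :
    ∀ l : List (Finset (V × A)), l ≠ [] →
      l.head? = some (Finset.univ.image fun v => (v, ψi v)) →
      l.getLast? = some (Finset.univ.image fun v => (v, ψt v)) →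
      l.Chain' (fun P Q => ((P \ Q) ∪ (Q \ P)).card ≤ 1) →
      (∀ C ∈ l, IsLYCover E π C) →
      ∃ C ∈ l, (2 - ε) * ((Fintype.card V : ℝ) + 1) < (C.card : ℝ) :=
  setcover_reconf_soundness_general E π ε hε1 d hd lam hlam0 hlam hreg hA hV ψi ψt hval
end
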